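/- (Ruppert's encroachment lemma) If the circumcenter ċ of a circle c of radius r_c lies strictly inside the diametral circle d of a segment pq (where d has center the midpoint of pq and radius r_d = |pq|/2), and neither endpoint p nor q lies strictly inside c, then r_d ≥ r_c/√2. -/

import Mathlib

open Metric

/-! By Apollonius' theorem, a point `c` strictly inside the diametral circle of `pq` sees `pq`
at an obtuse angle: `|cp|² + |cq|² < |pq|² = 4 r_d²`. Hence the nearer endpoint is at distance
less than `√2 r_d` from `c`, while an empty circumcircle forces both endpoints to be at distance
at least `r_c`. -/

namespace EuclideanGeometry

variable {V P : Type*} [NormedAddCommGroup V] [InnerProductSpace ℝ V] [MetricSpace P]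
  [NormedAddTorsor V P]

theorem dist_sq_add_dist_sq_lt_of_dist_midpoint_lt {p q c : P}
    (h : dist c (midpoint ℝ p q) < dist p q / 2) :
    dist c p ^ 2 + dist c q ^ 2 < dist p q ^ 2 := by
  rw [dist_sq_add_dist_sq_eq_two_mul_dist_midpoint_sq_add_half_dist_sq]
  nlinarith [dist_nonneg (x := c) (y := midpoint ℝ p q)]

theorem min_dist_lt_sqrt_two_mul_half_dist_of_dist_midpoint_lt {p q c : P}
    (h : dist c (midpoint ℝ p q) < dist p q / 2) :
    min (dist c p) (dist c q) < √2 * (dist p q / 2) := by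
  have hsum := dist_sq_add_dist_sq_lt_of_dist_midpoint_lt h
  have hmin_sq : min (dist c p) (dist c q) ^ 2 < 2 * (dist p q / 2) ^ 2 := by
    have := min_le_left (dist c p) (dist c q)
    have := min_le_right (dist c p) (dist c q)
    have : 0 ≤ min (dist c p) (dist c q) := le_min dist_nonneg dist_nonneg
    nlinarith
  calc min (dist c p) (dist c q) < √(2 * (dist p q / 2) ^ 2) :=
        Real.lt_sqrt_of_sq_lt hmin_sq
    _ = √2 * (dist p q / 2) := by
        rw [Real.sqrt_mul zero_le_two, Real.sqrt_sq (by positivity)]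

end EuclideanGeometry

theorem encroaching_circumcircle_radius_bound_general
    (p q c : EuclideanSpace ℝ (Fin 2)) (rc : ℝ)
    (hencroach : dist c (midpoint ℝ p q) < dist p q / 2)
    (hp : rc ≤ dist c p) (hq : rc ≤ dist c q) :
    rc / Real.sqrt 2 ≤ dist p q / 2 := by
  rw [div_le_iff₀ (by positivity), mul_comm]
  exact ((le_min hp hq).trans_lt
    (EuclideanGeometry.min_dist_lt_sqrt_two_mul_half_dist_of_dist_midpoint_lt hencroach)).le

/-- Ruppert's encroachment lemma: if the circumcenter `c` of a circle of radius `r_c`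
lies strictly inside the diametral circle of segment `pq` (center the midpoint of `pq`,
radius `r_d = dist p q / 2`), and neither `p` nor `q` lies strictly inside the circle
(`dist c p ≥ r_c`, `dist c q ≥ r_c`), then `r_d ≥ r_c / √2`. -/
theorem encroaching_circumcircle_radius_bound
    (p q c : EuclideanSpace ℝ (Fin 2)) (rc : ℝ) (hrc : 0 < rc)
    (hencroach : dist c (midpoint ℝ p q) < dist p q / 2)
    (hp : rc ≤ dist c p) (hq : rc ≤ dist c q) :
    rc / Real.sqrt 2 ≤ dist p q / 2 :=
  encroaching_circumcircle_radius_bound_general p q c rc hencroach hp hq
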